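/- For a prime p ≥ 7, K_{p,5} = -(p²-1)(p²-9)/480. -/

import Mathlib

/-!
Below degree `p`, the series `(1 + X) ^ p - 1 - X ^ p` has coefficients `p.choose k` and vanishing
constant term. Comparing the coefficients of `X ^ n`, `1 ≤ n ≤ 6`, in `Q * ((1 + X) ^ p - 1 - X ^ p)
= -p X` therefore gives a triangular linear system in `Q₀, …, Q₅` with diagonal entries `p`, whose
coefficients are polynomials in `p`; it is solved one coefficient at a time.
-/

open Finset

namespace PowerSeries

theorem coeff_one_add_X_pow {R : Type*} [CommSemiring R] (p n : ℕ) :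
    coeff n ((1 + X) ^ p : R⟦X⟧) = p.choose n := by
  rw [show ((1 + X) ^ p : R⟦X⟧) = ((1 + Polynomial.X) ^ p : Polynomial R) by simp,
    Polynomial.coeff_coe, Polynomial.coeff_one_add_X_pow]

theorem coeff_mul_one_add_X_pow_sub_one_sub_X_pow {R : Type*} [CommRing R] (Q : R⟦X⟧)
    {p n : ℕ} (hn : n < p) :
    coeff n (Q * ((1 + X) ^ p - 1 - X ^ p)) = ∑ i ∈ range n, coeff i Q * p.choose (n - i) := by
  rw [coeff_mul, Nat.sum_antidiagonal_eq_sum_range_succ_mk, sum_range_succ, Nat.sub_self]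
  simp only [map_sub, coeff_one_add_X_pow, coeff_one, coeff_X_pow, Nat.choose_zero_right,
    Nat.cast_one, if_pos, sub_self, if_neg (by omega : 0 ≠ p), mul_zero, add_zero]
  refine Finset.sum_congr rfl fun i hi => ?_
  have hi := mem_range.1 hi
  rw [if_neg (by omega), if_neg (by omega), sub_zero, sub_zero]

end PowerSeries

open PowerSeries in
theorem stmt_5_general (p : ℕ) (hp7 : 7 ≤ p)
    (Q : PowerSeries ℚ)
    (hQ : Q * ((1 + PowerSeries.X) ^ p - 1 - PowerSeries.X ^ p)
        = -(p : PowerSeries ℚ) * PowerSeries.X) :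
    PowerSeries.coeff 5 Q = -(((p : ℚ) ^ 2 - 1) * ((p : ℚ) ^ 2 - 9) / 480) := by
  have hp : (p : ℚ) ≠ 0 := Nat.cast_ne_zero.2 (by omega)
  have e (n : ℕ) (hn : n < 7) :
      ∑ i ∈ range n, coeff i Q * p.choose (n - i) = if n = 1 then -(p : ℚ) else 0 := by
    rw [← coeff_mul_one_add_X_pow_sub_one_sub_X_pow Q (by omega), hQ, ← map_natCast (C (R := ℚ)),
      neg_mul, map_neg, coeff_C_mul, coeff_X]
    split_ifs <;> simp
  have e1 := e 1 (by norm_num)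
  have e2 := e 2 (by norm_num)
  have e3 := e 3 (by norm_num)
  have e4 := e 4 (by norm_num)
  have e5 := e 5 (by norm_num)
  have e6 := e 6 (by norm_num)
  simp only [sum_range_succ, sum_range_zero, Nat.reduceSub, Nat.cast_choose_eq_descPochhammer_div,
    descPochhammer_succ_eval, descPochhammer_zero, Polynomial.eval_one, Nat.factorial]
    at e1 e2 e3 e4 e5 e6
  norm_num at e1 e2 e3 e4 e5 e6
  have q0 : constantCoeff Q = -1 := mul_right_cancel₀ hp (by linear_combination e1)
  have q1 : coeff 1 Q = (p - 1) / 2 :=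
    mul_right_cancel₀ hp (by rw [q0] at e2; linear_combination e2)
  have q2 : coeff 2 Q = (1 - p ^ 2) / 12 :=
    mul_right_cancel₀ hp (by rw [q0, q1] at e3; linear_combination e3)
  have q3 : coeff 3 Q = (p ^ 2 - 1) / 24 :=
    mul_right_cancel₀ hp (by rw [q0, q1, q2] at e4; linear_combination e4)
  have q4 : coeff 4 Q = (p ^ 4 - 20 * p ^ 2 + 19) / 720 :=
    mul_right_cancel₀ hp (by rw [q0, q1, q2, q3] at e5; linear_combination e5)
  exact mul_right_cancel₀ hp (by rw [q0, q1, q2, q3, q4] at e6; linear_combination e6)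

/-- For a prime `p ≥ 7`, `K_{p,5} = -(p²-1)(p²-9)/480`. -/
theorem stmt_5 (p : ℕ) (hp : p.Prime) (hp7 : 7 ≤ p)
    (Q : PowerSeries ℚ)
    (hQ : Q * ((1 + PowerSeries.X) ^ p - 1 - PowerSeries.X ^ p)
        = -(p : PowerSeries ℚ) * PowerSeries.X) :
    PowerSeries.coeff 5 Q = -(((p : ℚ) ^ 2 - 1) * ((p : ℚ) ^ 2 - 9) / 480) :=
  stmt_5_general p hp7 Q hQ
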